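/- arXiv:1602.03963 — 2 statements merged into one kernel-verified Lean document; each statement's English description precedes it below -/
import Mathlib

section
/- Assume the interaction graph G = (V, I) is acyclic. Then for any two distinct i, j ∈ V, if i and j are disconnected in G, or if the unique path between i and j in G has even length, then w_{{i,j}} = 0. -/
open Finset

/-- The sigmoid function `σ(t) = eᵗ/(1+eᵗ)`. -/
noncomputable def sigmoid (t : ℝ) : ℝ := Real.exp t / (1 + Real.exp t)

/-- Interpretation of a Boolean as `±1 ∈ ℝ`. -/
def pm (b : Bool) : ℝ := if b then 1 else -1

/-- `Σ_{{i,j}∈E} β_{{i,j}} x_i x_j`, summed over unordered pairs of distinct indices. -/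
noncomputable def fld (d : ℕ) (β : Fin d → Fin d → ℝ) (x : Fin d → Bool) : ℝ :=
  ∑ i : Fin d, ∑ j ∈ Finset.Ioi i, β i j * pm (x i) * pm (x j)

/-- `Pr(y = s·(+1) | x_V ∈ A)`.  Since the covariates are i.i.d. uniform on `{−1,+1}`
and `Pr(y = s | x_V = x) = σ(s · Σ β x_i x_j)`, this conditional probability equals
`(Σ_{x∈A} σ(s · fld x)) / |A|`. -/
noncomputable def condProbY (d : ℕ) (β : Fin d → Fin d → ℝ) (s : ℝ)
    (A : Finset (Fin d → Bool)) : ℝ :=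
  (∑ x ∈ A, sigmoid (s * fld d β x)) / A.card

open scoped Classical in
/-- The influence `w_e = |2·Pr(y = +1 | x_i = +1, x_j = +1) − 1|` for `e = {i,j}`. -/
noncomputable def wgt (d : ℕ) (β : Fin d → Fin d → ℝ) (e : Sym2 (Fin d)) : ℝ :=
  |2 * condProbY d β 1 (Finset.univ.filter (fun x => ∀ v ∈ e, x v = true)) - 1|

/-- The interaction graph `G = (V, I)` with `I = {{i,j} : β_{{i,j}} ≠ 0}`. -/
def interGraph (d : ℕ) (β : Fin d → Fin d → ℝ) : SimpleGraph (Fin d) :=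
  SimpleGraph.fromRel (fun i j => β i j ≠ 0)

/-!
Two-colour the acyclic interaction graph so that `i` and `j` receive the same colour `false`:
on each component take the parity of the distance to a root, rooting the component of `i`
at `i` and that of `j` at `j`; when `i` and `j` are connected, the even path keeps `j` at
even distance from `i`. Flipping the spins `x_v` of the `true`-coloured vertices flips exactly
one endpoint of every interaction, so it negates the field while fixing the event
`x_i = x_j = +1`. Since `σ(t) + σ(-t) = 1`, the conditional probability of `y = +1` given
that event is `1/2`.
-/

open SimpleGraph

namespace SimpleGraph

variable {V : Type*} {G : SimpleGraph V}

theorem IsAcyclic.length_eq_dist (hG : G.IsAcyclic) {u v : V} {p : G.Walk u v}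
    (hp : p.IsPath) : p.length = G.dist u v := by
  obtain ⟨q, hq, hqdist⟩ := p.reachable.exists_path_of_dist
  rw [← hqdist, Subtype.mk.inj <| hG.subsingleton_path u v |>.elim ⟨p, hp⟩ ⟨q, hq⟩]

theorem IsAcyclic.dist_eq_add_one_or_of_adj (hG : G.IsAcyclic) {a u v : V}
    (hau : G.Reachable a u) (huv : G.Adj u v) :
    G.dist a v = G.dist a u + 1 ∨ G.dist a u = G.dist a v + 1 := by
  classical
  obtain ⟨p, hp, hpdist⟩ := hau.exists_path_of_dist
  obtain ⟨q, hq, hqdist⟩ := (hau.trans huv.reachable).exists_path_of_dist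
  rw [← hpdist, ← hqdist]
  by_cases hv : v ∈ p.support
  · right
    rw [hG.path_concat hq hp huv.symm hv, Walk.length_concat]
  · left
    have hu : u ∈ q.support := hG.mem_support_of_ne_mem_support_of_adj_of_isPath hq hp huv.symm hv
    rw [hG.path_concat hp hq huv hu, Walk.length_concat]

theorem IsAcyclic.exists_coloring_bool_of_roots (hG : G.IsAcyclic)
    (ρ : G.ConnectedComponent → V) (hρ : ∀ C, G.connectedComponentMk (ρ C) = C) :
    ∃ c : G.Coloring Bool, ∀ v, c v = decide (Odd (G.dist (ρ (G.connectedComponentMk v)) v)) := by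
  refine ⟨Coloring.mk (fun v => decide (Odd (G.dist (ρ (G.connectedComponentMk v)) v)))
    fun {u v} huv => ?_, fun _ => rfl⟩
  have hroot : G.Reachable (ρ (G.connectedComponentMk u)) u :=
    ConnectedComponent.exact (hρ _)
  rw [ConnectedComponent.connectedComponentMk_eq_of_adj huv.symm]
  rcases hG.dist_eq_add_one_or_of_adj hroot huv with h | h <;>
    · simp [h, Nat.odd_add_one, ← Nat.not_even_iff_odd]

theorem IsAcyclic.exists_coloring_bool_eq_false (hG : G.IsAcyclic) {i j : V}
    (h : ¬ G.Reachable i j ∨ ∃ p : G.Path i j, Even p.1.length) :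
    ∃ c : G.Coloring Bool, c i = false ∧ c j = false := by
  classical
  let ρ : G.ConnectedComponent → V := fun C =>
    if C = G.connectedComponentMk i then i
    else if C = G.connectedComponentMk j then j else C.out
  have hρ : ∀ C, G.connectedComponentMk (ρ C) = C := by
    intro C
    simp only [ρ]
    split_ifs with hi hj
    · exact hi.symm
    · exact hj.symm
    · exact Quot.out_eq C
  obtain ⟨c, hc⟩ := hG.exists_coloring_bool_of_roots ρ hρ
  refine ⟨c, by simp [hc, ρ], ?_⟩
  rcases h with hij | ⟨p, hp⟩
  · have hji : G.connectedComponentMk j ≠ G.connectedComponentMk i :=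
      fun h => hij (ConnectedComponent.exact h.symm)
    simp [hc, ρ, hji]
  · have hji : G.connectedComponentMk j = G.connectedComponentMk i :=
      (ConnectedComponent.sound p.1.reachable).symm
    simp [hc, ρ, hji, ← hG.length_eq_dist p.2, hp]

end SimpleGraph

theorem sigmoid_add_sigmoid_neg (t : ℝ) : sigmoid t + sigmoid (-t) = 1 := by
  unfold sigmoid
  rw [Real.exp_neg]
  field_simp
  ring

theorem two_mul_sum_sigmoid_of_involution {α : Type*} (A : Finset α) (f : α → ℝ) (e : α → α)
    (he : ∀ x ∈ A, e x ∈ A) (hee : ∀ x ∈ A, e (e x) = x) (hf : ∀ x ∈ A, f (e x) = -f x) :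
    2 * ∑ x ∈ A, sigmoid (f x) = #A := by
  have hswap : ∑ x ∈ A, sigmoid (f x) = ∑ x ∈ A, sigmoid (-f x) :=
    sum_nbij' e e he he hee hee fun x hx => by rw [hf x hx, neg_neg]
  calc 2 * ∑ x ∈ A, sigmoid (f x) = ∑ x ∈ A, (sigmoid (f x) + sigmoid (-f x)) := by
        rw [sum_add_distrib, ← hswap, two_mul]
    _ = #A := by simp [sigmoid_add_sigmoid_neg]

theorem pm_xor (a b : Bool) : pm (xor a b) = -(pm a * pm b) := by
  cases a <;> cases b <;> norm_num [pm]

theorem fld_xor_coloring {d : ℕ} {β : Fin d → Fin d → ℝ} (c : (interGraph d β).Coloring Bool)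
    (x : Fin d → Bool) : fld d β (fun v => xor (x v) (c v)) = -fld d β x := by
  unfold fld
  simp only [pm_xor, ← sum_neg_distrib]
  refine sum_congr rfl fun u _ => sum_congr rfl fun v hv => ?_
  by_cases hβ : β u v = 0
  · simp [hβ]
  have hcuv : c u ≠ c v :=
    c.valid ((fromRel_adj _ _ _).mpr ⟨(mem_Ioi.mp hv).ne, Or.inl hβ⟩)
  have hpm : pm (c u) * pm (c v) = -1 := by
    revert hcuv
    cases c u <;> cases c v <;> norm_num [pm]
  linear_combination β u v * pm (x u) * pm (x v) * hpm

theorem wgt_eq_zero_of_coloring {d : ℕ} {β : Fin d → Fin d → ℝ} {i j : Fin d}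
    (c : (interGraph d β).Coloring Bool) (hi : c i = false) (hj : c j = false) :
    wgt d β s(i, j) = 0 := by
  classical
  let A := univ.filter fun x : Fin d → Bool => ∀ v ∈ s(i, j), x v = true
  have hmem : ∀ x, x ∈ A ↔ x i = true ∧ x j = true := by simp [A]
  have hA : 0 < (#A : ℝ) := by
    exact_mod_cast card_pos.mpr ⟨fun _ => true, (hmem _).mpr ⟨rfl, rfl⟩⟩
  have hsum : 2 * ∑ x ∈ A, sigmoid (fld d β x) = #A :=
    two_mul_sum_sigmoid_of_involution A (fld d β) (fun x v => xor (x v) (c v))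
      (fun x hx => by rw [hmem] at hx ⊢; simp [hx, hi, hj])
      (fun x _ => by simp)
      (fun x _ => fld_xor_coloring c x)
  unfold wgt condProbY
  simp only [one_mul]
  rw [abs_eq_zero, sub_eq_zero, ← mul_div_assoc, hsum, div_self hA.ne']

theorem statement2_general (d : ℕ) (β : Fin d → Fin d → ℝ)
    (hacyc : (interGraph d β).IsAcyclic)
    (i j : Fin d)
    (h : ¬ (interGraph d β).Reachable i j ∨
      ∃ p : (interGraph d β).Path i j, Even p.1.length) :
    wgt d β s(i, j) = 0 := by
  obtain ⟨c, hi, hj⟩ := hacyc.exists_coloring_bool_eq_false h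
  exact wgt_eq_zero_of_coloring c hi hj

/-- Proposition 3, Zero influence: if the interaction graph is acyclic
and `i ≠ j` are either disconnected, or the (unique) path between them has even length,
then `w_{{i,j}} = 0`. -/
theorem statement2 (d : ℕ) (hd : 2 ≤ d) (β : Fin d → Fin d → ℝ)
    (hsymm : ∀ i j, β i j = β j i)
    (hacyc : (interGraph d β).IsAcyclic)
    (i j : Fin d) (hij : i ≠ j)
    (h : ¬ (interGraph d β).Reachable i j ∨
      ∃ p : (interGraph d β).Path i j, Even p.1.length) :
    wgt d β s(i, j) = 0 :=
  statement2_general d β hacyc i j h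
end

section
/- Assume the interaction graph G = (V, I) is acyclic, and let {{i_1,i_2},{i_2,i_3},…,{i_m,i_{m+1}}} be a path of length m ≥ 2 in G (so all edges {i_s,i_{s+1}} belong to I and the vertices i_1,…,i_{m+1} are distinct). Then w_{{i_1,i_{m+1}}} < w_{{i_s,i_{s+1}}} for every s ∈ {1,…,m}. -/
/-!
Write `σ` for the sigmoid and `f(x) = Σ β_{ij} x_i x_j` for the field. Flipping the spins on
one side of a forest edge (a bridge) changes the sign of `x_i x_j` on that edge only, and
flipping one colour class of a 2-colouring of the forest negates `f`. Hence
`E[2σ(f) - 1] = 0`, and since `f` is even, `w_{ij} = |E[x_i x_j (2σ(f) - 1)]|`.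

Now pair every `x` with its flip across the path edge `e_t`. Both correlations become sums,
over `{x : x_{i_t} = x_{i_{t+1}}}`, of the same increments `σ(f(x)) - σ(f(x) - 2β_{e_t})`, all
of the sign of `β_{e_t}`. For `e_t` every coefficient is `1`; for the endpoints the
coefficient is `x_{i_1} x_{i_{m+1}} = ±1`, which takes both signs when `m ≥ 2`, so that sum is
strictly smaller in absolute value.

Spins are `Bool`s read through `pm`, and flipping the spins in `S` is `S + x` in the Boolean
ring `Fin d → Bool`.
-/

open Finset

theorem sigmoid_eq_real_sigmoid : sigmoid = Real.sigmoid := by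
  funext t
  rw [sigmoid, Real.sigmoid_def, Real.exp_neg]
  have := Real.exp_pos t
  field_simp
  ring

lemma pm_mul_self (a : Bool) : pm a * pm a = 1 := by
  cases a <;> norm_num [pm]

lemma pm_mul_pm (a b : Bool) : pm a * pm b = -pm (a + b) := by
  cases a <;> cases b <;> norm_num [pm, Bool.add_eq_xor]

lemma pm_true_add (b : Bool) : pm (true + b) = -pm b := by
  cases b <;> norm_num [pm, Bool.add_eq_xor]

lemma pm_decide (P : Prop) [Decidable P] : pm (decide P) = if P then 1 else -1 := by
  by_cases h : P <;> simp [pm, h]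

lemma pm_add_mul_pm_add (s t a b : Bool) :
    pm (s + a) * pm (t + b) = pm s * pm t * (pm a * pm b) := by
  cases s <;> cases t <;> cases a <;> cases b <;> norm_num [pm, Bool.add_eq_xor]

lemma pm_mul_pm_eq_one_or (a b : Bool) : pm a * pm b = 1 ∨ pm a * pm b = -1 := by
  cases a <;> cases b <;> norm_num [pm]

lemma sum_eq_zero_of_add_left_eq_neg {X : Type*} [Fintype X] [AddGroup X] {g : X → ℝ} (S : X)
    (hg : ∀ x, g (S + x) = -g x) : ∑ x, g x = 0 := by
  have h := Equiv.sum_comp (Equiv.addLeft S) g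
  simp only [Equiv.coe_addLeft, hg, Finset.sum_neg_distrib] at h
  linarith

lemma sum_eq_sum_filter_add_comp_of_involutive {X M : Type*} [Fintype X] [AddCommMonoid M]
    {τ : X → X} (hτ : Function.Involutive τ) (q : X → Prop) [DecidablePred q]
    (hq : ∀ x, q (τ x) ↔ ¬ q x) (g : X → M) :
    ∑ x, g x = ∑ x with q x, (g x + g (τ x)) := by
  rw [sum_add_distrib, ← sum_filter_add_sum_filter_not univ q]
  congr 1
  refine sum_nbij' τ τ (fun x hx => ?_) (fun x hx => ?_) (fun x _ => hτ x) (fun x _ => hτ x)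
    (fun x _ => by rw [hτ])
  · simp only [mem_filter, mem_univ, true_and] at hx ⊢
    exact (hq x).2 hx
  · simp only [mem_filter, mem_univ, true_and] at hx ⊢
    exact fun h => (hq x).1 h hx

lemma abs_sum_mul_lt_abs_sum {ι : Type*} {s : Finset ι} {w f : ι → ℝ}
    (hw : ∀ i ∈ s, |w i| ≤ 1) (hf : (∀ i ∈ s, 0 < f i) ∨ (∀ i ∈ s, f i < 0))
    (hlt : ∃ i ∈ s, w i < 1) (hgt : ∃ i ∈ s, -1 < w i) :
    |∑ i ∈ s, w i * f i| < |∑ i ∈ s, f i| := by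
  wlog hpos : ∀ i ∈ s, 0 < f i generalizing f
  · have hneg : ∀ i ∈ s, 0 < -f i := fun i hi =>
      neg_pos.2 (hf.resolve_left hpos i hi)
    simpa [sum_neg_distrib] using this (Or.inl hneg) hneg
  obtain ⟨i₁, hi₁, hw₁⟩ := hlt
  obtain ⟨i₂, hi₂, hw₂⟩ := hgt
  have hbound : ∀ i ∈ s, -f i ≤ w i * f i ∧ w i * f i ≤ f i := fun i hi => by
    have := abs_le.1 (hw i hi)
    constructor <;> nlinarith [hpos i hi]
  rw [abs_of_pos (sum_pos hpos ⟨i₁, hi₁⟩), abs_lt, ← sum_neg_distrib]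
  exact ⟨sum_lt_sum (fun i hi => (hbound i hi).1) ⟨i₂, hi₂, by nlinarith [hpos i₂ hi₂]⟩,
    sum_lt_sum (fun i hi => (hbound i hi).2) ⟨i₁, hi₁, by nlinarith [hpos i₁ hi₁]⟩⟩

theorem abs_sum_mul_lt_abs_sum_mul {X : Type*} [Fintype X] {φ : ℝ → ℝ} (hφ : StrictMono φ)
    {τ : X → X} (hτ : Function.Involutive τ) {f Z W : X → ℝ} {A : ℝ} (hA : A ≠ 0)
    (hZ : ∀ x, Z x = 1 ∨ Z x = -1) (hW : ∀ x, |W x| ≤ 1)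
    (hZτ : ∀ x, Z (τ x) = -Z x) (hWτ : ∀ x, W (τ x) = -W x)
    (hfτ : ∀ x, f (τ x) = f x - 2 * A * Z x)
    (hlt : ∃ x, Z x = 1 ∧ W x < 1) (hgt : ∃ x, Z x = 1 ∧ -1 < W x) :
    |∑ x, W x * φ (f x)| < |∑ x, Z x * φ (f x)| := by
  have hq : ∀ x, Z (τ x) = 1 ↔ ¬ Z x = 1 := fun x => by
    rcases hZ x with h | h <;> norm_num [hZτ, h]
  have pair : ∀ V : X → ℝ, (∀ x, V (τ x) = -V x) →
      ∑ x, V x * φ (f x) = ∑ x with Z x = 1, V x * (φ (f x) - φ (f x - 2 * A)) := by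
    intro V hV
    rw [sum_eq_sum_filter_add_comp_of_involutive hτ (fun x => Z x = 1) hq]
    refine sum_congr rfl fun x hx => ?_
    rw [hV, hfτ, (mem_filter.1 hx).2, mul_one]
    ring
  have hZ_one : ∑ x with Z x = 1, Z x * (φ (f x) - φ (f x - 2 * A))
      = ∑ x with Z x = 1, 1 * (φ (f x) - φ (f x - 2 * A)) :=
    sum_congr rfl fun x hx => by rw [(mem_filter.1 hx).2]
  rw [pair W hWτ, pair Z hZτ, hZ_one, sum_congr rfl fun x _ => one_mul _]
  refine abs_sum_mul_lt_abs_sum (fun x _ => hW x) ?_ (by simpa using hlt) (by simpa using hgt)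
  rcases hA.lt_or_gt with hA | hA
  · exact Or.inr fun x _ => sub_neg.2 (hφ (by linarith))
  · exact Or.inl fun x _ => sub_pos.2 (hφ (by linarith))

section Energy

variable {d : ℕ} {β : Fin d → Fin d → ℝ}

lemma fld_add_left (S x : Fin d → Bool) :
    fld d β (S + x) = fld d (fun i j => pm (S i) * pm (S j) * β i j) x := by
  unfold fld
  refine sum_congr rfl fun i _ => sum_congr rfl fun j _ => ?_
  have := pm_add_mul_pm_add (S i) (S j) (x i) (x j)
  simp only [Pi.add_apply]
  linear_combination β i j * this

lemma fld_add_left_eq_neg {S : Fin d → Bool}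
    (hS : ∀ i j, i ≠ j → β i j ≠ 0 → S i + S j = true) (x : Fin d → Bool) :
    fld d β (S + x) = -fld d β x := by
  rw [fld_add_left]
  unfold fld
  simp only [← sum_neg_distrib]
  refine sum_congr rfl fun i _ => sum_congr rfl fun j hj => ?_
  by_cases hβ : β i j = 0
  · simp [hβ]
  · rw [pm_mul_pm, hS i j (mem_Ioi.1 hj).ne hβ, show pm true = 1 from rfl]
    ring

lemma sum_sum_Ioi_ite_sym2_eq {ι M : Type*} [Fintype ι] [LinearOrder ι]
    [LocallyFiniteOrderTop ι] [AddCommMonoid M] {g : ι → ι → M} (hg : ∀ i j, g i j = g j i)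
    {a b : ι} (hab : a ≠ b) :
    ∑ i, ∑ j ∈ Ioi i, (if s(i, j) = s(a, b) then g i j else 0) = g a b := by
  wlog hlt : a < b generalizing a b
  · rw [Sym2.eq_swap, hg]
    exact this hab.symm (lt_of_le_of_ne (not_lt.1 hlt) hab.symm)
  rw [sum_eq_single a, sum_eq_single b]
  · simp
  · intro j _ hjb
    refine if_neg ?_
    rw [Sym2.eq_iff]
    rintro (⟨-, rfl⟩ | ⟨rfl, -⟩)
    · exact hjb rfl
    · exact hab rfl
  · exact fun h => absurd (mem_Ioi.2 hlt) h
  · intro i _ hia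
    refine sum_eq_zero fun j hj => if_neg ?_
    rw [Sym2.eq_iff]
    rintro (⟨rfl, -⟩ | ⟨rfl, rfl⟩)
    · exact hia rfl
    · exact absurd (mem_Ioi.1 hj) (not_lt.2 hlt.le)
  · simp

lemma fld_add_left_eq_sub {S : Fin d → Bool} {a b : Fin d} (hab : a ≠ b)
    (hsymm : ∀ i j, β i j = β j i)
    (hS : ∀ i j, i ≠ j → β i j ≠ 0 → S i + S j = decide (s(i, j) = s(a, b)))
    (x : Fin d → Bool) :
    fld d β (S + x) = fld d β x - 2 * β a b * (pm (x a) * pm (x b)) := by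
  have hterm : ∀ i, ∀ j ∈ Ioi i, pm (S i) * pm (S j) * β i j * pm (x i) * pm (x j)
      = β i j * pm (x i) * pm (x j)
        - 2 * (if s(i, j) = s(a, b) then β i j * (pm (x i) * pm (x j)) else 0) := by
    intro i j hj
    by_cases hβ : β i j = 0
    · simp [hβ]
    · rw [pm_mul_pm, hS i j (mem_Ioi.1 hj).ne hβ, pm_decide]
      split_ifs <;> ring
  rw [fld_add_left]
  unfold fld
  simp only [sum_congr rfl (hterm _), sum_sub_distrib, ← mul_sum]
  rw [sum_sum_Ioi_ite_sym2_eq (fun i j => by rw [hsymm, mul_comm (pm (x i))]) hab]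
  ring

end Energy

namespace SimpleGraph

variable {V : Type*} {G : SimpleGraph V}

lemma IsAcyclic.exists_add_eq_true (hG : G.IsAcyclic) :
    ∃ S : V → Bool, ∀ ⦃i j⦄, G.Adj i j → S i + S j = true :=
  ⟨fun v => finTwoEquiv (hG.coloringTwo v), fun i j hij => by
    simpa [Bool.add_eq_xor] using finTwoEquiv.injective.ne (hG.coloringTwo.valid hij)⟩

/-- A forest edge is a bridge, so the component of one endpoint after deleting it is a cut
crossed by that edge alone. -/
lemma IsAcyclic.exists_add_eq_decide [DecidableEq V] (hG : G.IsAcyclic) {a b : V}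
    (hab : G.Adj a b) :
    ∃ S : V → Bool, ∀ ⦃i j⦄, G.Adj i j → S i + S j = decide (s(i, j) = s(a, b)) := by
  classical
  have hbridge := isBridge_iff.1 (isAcyclic_iff_forall_adj_isBridge.1 hG hab)
  refine ⟨fun v => decide ((G.deleteEdges {s(a, b)}).Reachable a v), fun i j hij => ?_⟩
  by_cases he : s(i, j) = s(a, b)
  · rcases Sym2.eq_iff.1 he with ⟨rfl, rfl⟩ | ⟨rfl, rfl⟩ <;> simp [hbridge, Bool.add_eq_xor]
  · have hadj : (G.deleteEdges {s(a, b)}).Adj i j := by simp [hij, he]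
    have hiff : (G.deleteEdges {s(a, b)}).Reachable a i ↔
        (G.deleteEdges {s(a, b)}).Reachable a j :=
      ⟨fun h => h.trans hadj.reachable, fun h => h.trans hadj.symm.reachable⟩
    simp only [hiff, he, decide_false, Bool.add_eq_xor, Bool.xor_self]

end SimpleGraph

lemma Fin.prod_castSucc_mul_succ {M : Type*} [CommMonoid M] {m : ℕ} (g : Fin (m + 1) → M)
    (hg : ∀ k, g k * g k = 1) :
    ∏ k : Fin m, g k.castSucc * g k.succ = g 0 * g (Fin.last m) := by
  induction m with
  | zero => simp [hg]
  | succ m ih =>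
    rw [Fin.prod_univ_castSucc]
    simp only [Fin.succ_castSucc, Fin.succ_last]
    rw [ih (fun k => g k.castSucc) (fun k => hg _), Fin.castSucc_zero, ← mul_assoc,
      mul_assoc (g 0), hg, mul_one]

section Path

variable {V : Type*} {m : ℕ} {p : Fin (m + 1) → V}

lemma path_edge_eq_iff (hp : Function.Injective p) {k t : Fin m} :
    s(p k.castSucc, p k.succ) = s(p t.castSucc, p t.succ) ↔ k = t := by
  refine ⟨fun h => ?_, fun h => h ▸ rfl⟩
  rcases Sym2.eq_iff.1 h with ⟨h₁, -⟩ | ⟨h₁, h₂⟩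
  · exact Fin.castSucc_injective _ (hp h₁)
  · have e₁ := congrArg Fin.val (hp h₁)
    have e₂ := congrArg Fin.val (hp h₂)
    simp only [Fin.val_castSucc, Fin.val_succ] at e₁ e₂
    omega

lemma pm_mul_pm_path_ends {S : V → Bool} {t : Fin m}
    (hS : ∀ k : Fin m, S (p k.castSucc) + S (p k.succ) = decide (k = t)) :
    pm (S (p 0)) * pm (S (p (Fin.last m))) = -1 := by
  rw [← Fin.prod_castSucc_mul_succ (fun k => pm (S (p k))) (fun k => pm_mul_self _)]
  simp [pm_mul_pm, hS, pm_decide, apply_ite (fun x : ℝ => -x)]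

end Path

section Influence

variable {d : ℕ} {β : Fin d → Fin d → ℝ}

lemma sum_pm_mul_eq_zero {S : Fin d → Bool} {i : Fin d} (hSi : S i = true)
    {ψ : (Fin d → Bool) → ℝ} (hψ : ∀ x, ψ (S + x) = ψ x) :
    ∑ x, pm (x i) * ψ x = 0 :=
  sum_eq_zero_of_add_left_eq_neg S fun x => by rw [hψ, Pi.add_apply, hSi, pm_true_add, neg_mul]

lemma four_mul_sum_filter_eq {i j : Fin d} {ψ : (Fin d → Bool) → ℝ}
    (hψ : ∀ x, ψ ((fun _ => true) + x) = ψ x) :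
    4 * ∑ x with x i = true ∧ x j = true, ψ x = ∑ x, ψ x + ∑ x, pm (x i) * pm (x j) * ψ x := by
  have hexpand : ∀ x : Fin d → Bool, 4 * (if x i = true ∧ x j = true then ψ x else 0)
      = ψ x + pm (x i) * ψ x + pm (x j) * ψ x + pm (x i) * pm (x j) * ψ x := fun x => by
    cases x i <;> cases x j <;> norm_num [pm]
    ring
  rw [sum_filter, mul_sum]
  simp only [hexpand, sum_add_distrib, sum_pm_mul_eq_zero rfl hψ]
  ring

lemma four_mul_card_filter {i j : Fin d} (hij : i ≠ j) :
    4 * (#{x : Fin d → Bool | x i = true ∧ x j = true} : ℝ) = Fintype.card (Fin d → Bool) := by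
  have hflip : ∀ x : Fin d → Bool, pm (((Pi.single i true : Fin d → Bool) + x) j) = pm (x j) :=
    fun x => by rw [Pi.add_apply, Pi.single_eq_of_ne hij.symm, zero_add]
  have hcorr : ∑ x : Fin d → Bool, pm (x i) * pm (x j) = 0 :=
    sum_pm_mul_eq_zero (by simp) hflip
  have h := four_mul_sum_filter_eq (i := i) (j := j) (ψ := fun _ => (1 : ℝ)) fun _ => rfl
  simp only [mul_one, hcorr, sum_const, nsmul_eq_mul, card_univ, add_zero] at h
  exact h

lemma wgt_eq_abs_sum_div {i j : Fin d} (hij : i ≠ j)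
    (hsum : ∑ x, (2 * sigmoid (fld d β x) - 1) = 0) :
    wgt d β s(i, j)
      = |∑ x, pm (x i) * pm (x j) * (2 * sigmoid (fld d β x) - 1)|
          / Fintype.card (Fin d → Bool) := by
  classical
  have hfilter : (univ.filter fun x : Fin d → Bool => ∀ v ∈ s(i, j), x v = true)
      = univ.filter fun x => x i = true ∧ x j = true := by
    ext x
    simp
  have hflip : ∀ x, fld d β ((fun _ => true) + x) = fld d β x := fun x => by
    simp only [fld_add_left, show pm true = 1 from rfl, one_mul]
  have hA := four_mul_sum_filter_eq (i := i) (j := j)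
    (ψ := fun x => 2 * sigmoid (fld d β x) - 1) fun x => by rw [hflip]
  rw [hsum, zero_add] at hA
  have hcard := four_mul_card_filter (d := d) hij
  have hpos : (0 : ℝ) < #{x : Fin d → Bool | x i = true ∧ x j = true} := by
    have : (0 : ℝ) < Fintype.card (Fin d → Bool) := by exact_mod_cast Fintype.card_pos
    linarith
  rw [wgt, hfilter, condProbY, ← hA, ← hcard, sum_sub_distrib, ← mul_sum, sum_const,
    nsmul_eq_mul, mul_one, abs_mul, abs_of_pos (by norm_num : (0 : ℝ) < 4)]
  simp only [one_mul]
  set n : ℝ := ↑(#{x : Fin d → Bool | x i = true ∧ x j = true})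
  set s := ∑ x with x i = true ∧ x j = true, sigmoid (fld d β x)
  rw [show 2 * (s / n) - 1 = (2 * s - n) / n by field_simp, abs_div, abs_of_pos hpos,
    mul_div_mul_left _ _ four_ne_zero]

end Influence

theorem abs_sum_ends_lt_abs_sum_edge {d m : ℕ} (hm : 2 ≤ m) {β : Fin d → Fin d → ℝ}
    (hsymm : ∀ i j, β i j = β j i) {p : Fin (m + 1) → Fin d} (hp : Function.Injective p)
    {t : Fin m} (hβt : β (p t.castSucc) (p t.succ) ≠ 0) {S : Fin d → Bool}
    (hS : ∀ i j, i ≠ j → β i j ≠ 0 → S i + S j = decide (s(i, j) = s(p t.castSucc, p t.succ)))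
    (hSpath : ∀ k : Fin m, S (p k.castSucc) + S (p k.succ) = decide (k = t))
    {φ : ℝ → ℝ} (hφ : StrictMono φ) :
    |∑ x : Fin d → Bool, pm (x (p 0)) * pm (x (p (Fin.last m))) * φ (fld d β x)|
      < |∑ x : Fin d → Bool, pm (x (p t.castSucc)) * pm (x (p t.succ)) * φ (fld d β x)| := by
  have hne : p t.castSucc ≠ p t.succ := hp.ne (Fin.castSucc_lt_succ (i := t)).ne
  have hflip : ∀ {a b : Fin d}, pm (S a) * pm (S b) = -1 → ∀ x : Fin d → Bool,
      pm ((S + x) a) * pm ((S + x) b) = -(pm (x a) * pm (x b)) := fun h x => by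
    rw [Pi.add_apply, Pi.add_apply, pm_add_mul_pm_add, h, neg_one_mul]
  obtain ⟨e, he, hea, heb⟩ : ∃ e : Fin (m + 1), (e = 0 ∨ e = Fin.last m) ∧
      p e ≠ p t.castSucc ∧ p e ≠ p t.succ := by
    by_cases ht : (t : ℕ) = 0
    · exact ⟨Fin.last m, Or.inr rfl, hp.ne (by simp [Fin.ext_iff]; omega),
        hp.ne (by simp [Fin.ext_iff]; omega)⟩
    · exact ⟨0, Or.inl rfl, hp.ne (by simp [Fin.ext_iff]; omega),
        hp.ne (by simp [Fin.ext_iff])⟩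
  refine abs_sum_mul_lt_abs_sum_mul hφ (τ := (S + ·))
    (fun x => by funext v; simp [Bool.add_eq_xor]) hβt
    (fun x => pm_mul_pm_eq_one_or _ _) (fun x => ?_)
    (hflip (by rw [pm_mul_pm, hSpath t]; simp [pm]))
    (hflip (pm_mul_pm_path_ends hSpath)) (fun x => fld_add_left_eq_sub hne hsymm hS x)
    ⟨fun v => decide (v ≠ p e), ?_⟩ ⟨fun _ => true, by norm_num [pm]⟩
  · rcases pm_mul_pm_eq_one_or (x (p 0)) (x (p (Fin.last m))) with h | h <;> simp [h]
  · have hends : p 0 ≠ p (Fin.last m) := hp.ne (by simp [Fin.ext_iff]; omega)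
    rcases he with rfl | rfl <;> simp [pm, hea.symm, heb.symm, hends, hends.symm]

theorem statement4_general (d m : ℕ) (hm : 2 ≤ m) (β : Fin d → Fin d → ℝ)
    (hsymm : ∀ i j, β i j = β j i)
    (hacyc : (interGraph d β).IsAcyclic)
    (p : Fin (m + 1) → Fin d) (hinj : Function.Injective p)
    (hedge : ∀ k : Fin m, β (p k.castSucc) (p k.succ) ≠ 0) :
    ∀ t : Fin m, wgt d β s(p 0, p (Fin.last m)) < wgt d β s(p t.castSucc, p t.succ) := by
  intro t
  have hadj : ∀ {i j}, i ≠ j → β i j ≠ 0 → (interGraph d β).Adj i j :=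
    fun hij hβ => ⟨hij, Or.inl hβ⟩
  have hpath_ne : ∀ k : Fin m, p k.castSucc ≠ p k.succ :=
    fun k => hinj.ne (Fin.castSucc_lt_succ (i := k)).ne
  obtain ⟨R, hR⟩ := hacyc.exists_add_eq_true
  have hsum : ∑ x, (2 * sigmoid (fld d β x) - 1) = 0 := sum_eq_zero_of_add_left_eq_neg R
    fun x => by
      rw [fld_add_left_eq_neg (fun i j hij hβ => hR (hadj hij hβ)), sigmoid_eq_real_sigmoid,
        Real.sigmoid_neg]
      ring
  obtain ⟨S, hS⟩ := hacyc.exists_add_eq_decide (hadj (hpath_ne t) (hedge t))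
  have hSpath : ∀ k : Fin m, S (p k.castSucc) + S (p k.succ) = decide (k = t) := fun k => by
    rw [hS (hadj (hpath_ne k) (hedge k)), decide_eq_decide.2 (path_edge_eq_iff hinj)]
  rw [wgt_eq_abs_sum_div (hinj.ne (by simp [Fin.ext_iff]; omega)) hsum,
    wgt_eq_abs_sum_div (hpath_ne t) hsum]
  refine div_lt_div_of_pos_right ?_ (by exact_mod_cast Fintype.card_pos)
  refine abs_sum_ends_lt_abs_sum_edge (φ := fun y => 2 * sigmoid y - 1) hm hsymm hinj
    (hedge t) (fun i j hij hβ => hS (hadj hij hβ)) hSpath fun a b hab => ?_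
  rw [sigmoid_eq_real_sigmoid]
  linarith [Real.sigmoid_strictMono hab]

/-- Proposition 4, Indirect influence: if the interaction graph is acyclic
and `{i_1,i_2},…,{i_m,i_{m+1}}` is a path of length `m ≥ 2` in it, then
`w_{{i_1,i_{m+1}}} < w_{{i_s,i_{s+1}}}` for every `s ∈ {1,…,m}`. -/
theorem statement4 (d m : ℕ) (hd : 2 ≤ d) (hm : 2 ≤ m) (β : Fin d → Fin d → ℝ)
    (hsymm : ∀ i j, β i j = β j i)
    (hacyc : (interGraph d β).IsAcyclic)
    (p : Fin (m + 1) → Fin d) (hinj : Function.Injective p)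
    (hedge : ∀ k : Fin m, β (p k.castSucc) (p k.succ) ≠ 0) :
    ∀ t : Fin m, wgt d β s(p 0, p (Fin.last m)) < wgt d β s(p t.castSucc, p t.succ) :=
  statement4_general d m hm β hsymm hacyc p hinj hedge
end
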